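/- arXiv:2412.10066 — 3 statements merged into one kernel-verified Lean document; each statement's English description precedes it below -/
import Mathlib

section
/- There is no infinite sequence A₀, A₁, A₂, … of (possibly non-ground) M-constrained congruence classes such that for every i ≥ 0 the class Aᵢ is not subsumed by any class in {A₀, …, A_{i−1}}. -/
namespace NGCC

inductive Tm (F : Type) : Type
  | var : ℕ → Tm F
  | app : F → List (Tm F) → Tm F

instance {F : Type} : Inhabited (Tm F) := ⟨Tm.var 0⟩

namespace Tm
variable {F : Type}

def subst (σ : ℕ → Tm F) : Tm F → Tm F
  | var x => σ x
  | app f ts => app f (ts.attach.map fun t => t.1.subst σ)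
  decreasing_by simp only [app.sizeOf_spec]; have h := List.sizeOf_lt_of_mem t.2; omega

def varsList : Tm F → List ℕ
  | var x => [x]
  | app _ ts => (ts.attach.map fun t => t.1.varsList).flatten
  decreasing_by simp only [app.sizeOf_spec]; have h := List.sizeOf_lt_of_mem t.2; omega

def varsIn (t : Tm F) : Set ℕ := {x | x ∈ t.varsList}

def Ground (t : Tm F) : Prop := t.varsList = []

def size : Tm F → ℕ
  | var _ => 1
  | app _ ts => 1 + (ts.attach.map fun t => t.1.size).sum
  decreasing_by simp only [app.sizeOf_spec]; have h := List.sizeOf_lt_of_mem t.2; omega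

def count (x : ℕ) : Tm F → ℕ
  | var y => if y = x then 1 else 0
  | app _ ts => (ts.attach.map fun t => count x t.1).sum
  decreasing_by simp only [app.sizeOf_spec]; have h := List.sizeOf_lt_of_mem t.2; omega

def eval {α : Type} (I : F → List α → α) (v : ℕ → α) : Tm F → α
  | var x => v x
  | app f ts => I f (ts.attach.map fun t => t.1.eval I v)
  decreasing_by simp only [app.sizeOf_spec]; have h := List.sizeOf_lt_of_mem t.2; omega

end Tm


abbrev Subst (F : Type) := ℕ → Tm F

def Subst.dom {F : Type} (σ : Subst F) : Set ℕ := {x | σ x ≠ Tm.var x}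

def Subst.comp {F : Type} (σ δ : Subst F) : Subst F := fun x => (σ x).subst δ

structure CTerm (F : Type) where
  constr : Set (Tm F)
  term : Tm F

abbrev CClass (F : Type) := Set (CTerm F)

variable {F : Type}

/-- Application of a substitution to a constraint (set of atoms `u ∈ M`). -/
def substConstr (Γ : Set (Tm F)) (σ : Subst F) : Set (Tm F) := (fun u => u.subst σ) '' Γ

def CTerm.subst (ct : CTerm F) (σ : Subst F) : CTerm F :=
  ⟨substConstr ct.constr σ, ct.term.subst σ⟩

def substClass (A : CClass F) (σ : Subst F) : CClass F := (fun ct => ct.subst σ) '' A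

/-- `Γσ` is true: every atom of `Γσ` belongs to `M`. -/
def ConstrHolds (M : Set (Tm F)) (Γ : Set (Tm F)) (σ : Subst F) : Prop :=
  substConstr Γ σ ⊆ M

/-- Satisfiability of a constraint with respect to `M`. -/
def ConstrSat (M : Set (Tm F)) (Γ : Set (Tm F)) : Prop :=
  ∃ σ : Subst F, ConstrHolds M Γ σ

/-- `σ` is grounding for the class `A` (for all its constrained terms). -/
def GroundingForClass (σ : Subst F) (A : CClass F) : Prop :=
  ∀ ct ∈ A, (ct.term.subst σ).Ground ∧ ∀ u ∈ ct.constr, (u.subst σ).Ground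

/-- Separating variables of a class. -/
def sepVars (A : CClass F) : Set ℕ := ⋂ ct ∈ A, (CTerm.term ct).varsIn

/-- All variables of the terms of a class. -/
def termVars (A : CClass F) : Set ℕ := ⋃ ct ∈ A, (CTerm.term ct).varsIn

/-- Free variables of a class. -/
def freeVars (A : CClass F) : Set ℕ := termVars A \ sepVars A

/-- All variables occurring in a class (terms and constraints). -/
def varsAll (A : CClass F) : Set ℕ :=
  ⋃ ct ∈ A, ((CTerm.term ct).varsIn ∪ ⋃ u ∈ CTerm.constr ct, u.varsIn)

/-- `gnd'(A)`. -/
def gnd' (M : Set (Tm F)) (A : CClass F) : Set (CClass F) :=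
  { B | ∃ σ : Subst F, Subst.dom σ = sepVars A ∧ (∀ x ∈ Subst.dom σ, (σ x).Ground) ∧
      B = { ct' | ∃ ct ∈ A, ConstrSat M (substConstr (CTerm.constr ct) σ) ∧ ct' = ct.subst σ } }

/-- `gnd(A)`: sets of ground terms. -/
def gnd (M : Set (Tm F)) (A : CClass F) : Set (Set (Tm F)) :=
  { S | ∃ B ∈ gnd' M A,
      S = { t | ∃ σ : Subst F, GroundingForClass σ B ∧
              ∃ ct ∈ B, ConstrHolds M (CTerm.constr ct) σ ∧ t = (CTerm.term ct).subst σ } }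

/-- The elements of `gnd(A)` regarded as classes of constrained ground terms. -/
def gndCl (M : Set (Tm F)) (A : CClass F) : Set (CClass F) :=
  { S | ∃ B ∈ gnd' M A,
      S = { ct' | ∃ σ : Subst F, GroundingForClass σ B ∧
              ∃ ct ∈ B, ConstrHolds M (CTerm.constr ct) σ ∧ ct' = ct.subst σ } }

/-- `B` subsumes `A`. -/
def Subsumes (M : Set (Tm F)) (B A : CClass F) : Prop :=
  ∀ A' ∈ gnd M A, ∃ B' ∈ gnd M B, A' ⊆ B'

/-- `A` is `M`-constrained: the atom `sᵢ ∈ M` occurs in `Γᵢ` for each `Γᵢ ∥ sᵢ ∈ A`. -/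
def MConstrained (A : CClass F) : Prop := ∀ ct ∈ A, CTerm.term ct ∈ CTerm.constr ct

/-- `ρ` is a renaming of the free variables of `A` to fresh variables. -/
def IsNormRenaming (A : CClass F) (ρ : Subst F) : Prop :=
  (∀ x, ∃ y, ρ x = Tm.var y) ∧ (∀ x, x ∉ freeVars A → ρ x = Tm.var x) ∧
  (∀ x ∈ freeVars A, ∀ x' ∈ freeVars A, ρ x = ρ x' → x = x') ∧
  (∀ x ∈ freeVars A, ∀ y, ρ x = Tm.var y → y ∉ varsAll A)

/-- The normal class `norm(A)` for the renaming `ρ`. -/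
def normC (A : CClass F) (ρ : Subst F) : CClass F :=
  { ct' | ∃ ct ∈ A, ct' = ⟨CTerm.constr ct ∪ substConstr (CTerm.constr ct) ρ, CTerm.term ct⟩ } ∪
  { ct' | ∃ ct ∈ A, ((CTerm.term ct).varsIn ∩ freeVars A).Nonempty ∧
      ct' = ⟨CTerm.constr ct ∪ substConstr (CTerm.constr ct) ρ, (CTerm.term ct).subst ρ⟩ }

/-- `Aμ` for a grounding substitution `μ`: the set of ground terms
`{sμ | Γ ∥ s ∈ A and Γμ true}`. -/
def applyClass (M : Set (Tm F)) (A : CClass F) (μ : Subst F) : Set (Tm F) :=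
  { t | ∃ ct ∈ A, ConstrHolds M (CTerm.constr ct) μ ∧ t = (CTerm.term ct).subst μ }

/-- Subterm relation. -/
inductive Subterm {F : Type} : Tm F → Tm F → Prop
  | refl (t : Tm F) : Subterm t t
  | app {s t : Tm F} (f : F) (ts : List (Tm F)) : t ∈ ts → Subterm s t → Subterm s (Tm.app f ts)

/-- `s` occurs as a (sub)term in `Π`. -/
def OccursIn (s : Tm F) (P : Set (CClass F)) : Prop :=
  ∃ A ∈ P, ∃ ct ∈ A, Subterm s (CTerm.term ct) ∨ ∃ u ∈ CTerm.constr ct, Subterm s u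

/-- `M` is `Π`-closed for the ground term `t`. -/
def PiClosed (M : Set (Tm F)) (P : Set (CClass F)) (t : Tm F) : Prop :=
  ∀ s, OccursIn s P → ∀ σ : Subst F, s.subst σ ∈ M →
    ∀ δ : Subst F, (∀ x, σ x ≠ δ x → δ x = t) → s.subst δ ∈ M

/-- Semantic equational consequence: every model of the (implicitly universally
quantified) equations is a model of `s ≈ t`. -/
def Entails (Eqs : Set (Tm F × Tm F)) (s t : Tm F) : Prop :=
  ∀ (α : Type) (_ : Nonempty α) (I : F → List α → α) (v : ℕ → α),
    (∀ e ∈ Eqs, ∀ w : ℕ → α, Tm.eval I w e.1 = Tm.eval I w e.2) →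
    Tm.eval I v s = Tm.eval I v t

/-- `gnd_M(E)`: ground instances of equations of `E` with all ground terms in `M`. -/
def gndM (M : Set (Tm F)) (E : Set (Tm F × Tm F)) : Set (Tm F × Tm F) :=
  { e | ∃ p ∈ E, ∃ σ : Subst F,
      e = (Tm.subst σ p.1, Tm.subst σ p.2) ∧ Tm.subst σ p.1 ∈ M ∧ Tm.subst σ p.2 ∈ M }

def IsUnifier (μ : Subst F) (s t : Tm F) : Prop := s.subst μ = t.subst μ

def IsMGU (μ : Subst F) (s t : Tm F) : Prop :=
  IsUnifier μ s t ∧ ∀ τ : Subst F, IsUnifier τ s t → ∃ δ : Subst F, τ = Subst.comp μ δ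

/-- Simultaneous most general unifier of the equations `s₁ = t₁` and `s₂ = t₂`. -/
def IsSimMGU (μ : Subst F) (s₁ t₁ s₂ t₂ : Tm F) : Prop :=
  IsUnifier μ s₁ t₁ ∧ IsUnifier μ s₂ t₂ ∧
  ∀ τ : Subst F, IsUnifier τ s₁ t₁ → IsUnifier τ s₂ t₂ → ∃ δ : Subst F, τ = Subst.comp μ δ

/-- Conjoin a constraint to every constrained term of a class. -/
def addConstr (A : CClass F) (Γ : Set (Tm F)) : CClass F :=
  { ct' | ∃ ct ∈ A, ct' = ⟨CTerm.constr ct ∪ Γ, CTerm.term ct⟩ }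

/-- The rules of the calculus CC(X). -/
inductive Step {F : Type} (M : Set (Tm F)) : Set (CClass F) → Set (CClass F) → Prop
  | merge (P : Set (CClass F)) (A B C' : CClass F) (ρA ρB μ : Subst F) (ct₁ ct₂ : CTerm F)
      (hA : A ∈ P) (hB : B ∈ P)
      (hρA : IsNormRenaming A ρA) (hρB : IsNormRenaming B ρB)
      (h1 : ct₁ ∈ A) (h2 : ct₂ ∈ B)
      (hmgu : IsMGU μ ct₁.term ct₂.term)
      (hC' : C' = substClass (addConstr (normC A ρA) (ct₁.constr ∪ ct₂.constr) ∪
                               addConstr (normC B ρB) (ct₁.constr ∪ ct₂.constr)) μ)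
      (hnsub : ∀ C ∈ P, ¬ Subsumes M C C') :
      Step M P (insert C' P)
  | deduction (P : Set (CClass F)) (A B C' : CClass F) (f : F)
      (ss ts ss' ts' : List (Tm F)) (Γ Δ : Set (Tm F)) (Γs Δs : List (Set (Tm F))) (μ : Subst F)
      (hA : A ∈ P) (hB : B ∈ P)
      (h1 : (⟨Γ, Tm.app f ss⟩ : CTerm F) ∈ A)
      (h2 : (⟨Δ, Tm.app f ts⟩ : CTerm F) ∈ B)
      (hl1 : ss'.length = ss.length) (hl2 : ts'.length = ss.length)
      (hl3 : ts.length = ss.length) (hl4 : Γs.length = ss.length) (hl5 : Δs.length = ss.length)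
      (hside : ∀ i < ss.length, ∃ D ∈ P, ∃ ρ : Subst F, IsNormRenaming D ρ ∧
          (⟨Γs[i]!, ss'[i]!⟩ : CTerm F) ∈ normC D ρ ∧ (⟨Δs[i]!, ts'[i]!⟩ : CTerm F) ∈ normC D ρ)
      (hmgu : IsSimMGU μ (Tm.app f ss') (Tm.app f ss) (Tm.app f ts') (Tm.app f ts))
      (hC' : C' = substClass
          ({⟨Γ ∪ Δ ∪ ⋃₀ {G | G ∈ Γs} ∪ ⋃₀ {G | G ∈ Δs}, Tm.app f ss'⟩,
            ⟨Γ ∪ Δ ∪ ⋃₀ {G | G ∈ Γs} ∪ ⋃₀ {G | G ∈ Δs}, Tm.app f ts'⟩} : CClass F) μ)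
      (hnsub : ∀ C ∈ P, ¬ Subsumes M C C') :
      Step M P (insert C' P)
  | subsump (P : Set (CClass F)) (A B : CClass F)
      (hA : A ∈ P) (hB : B ∈ P) (hne : A ≠ B) (hsub : Subsumes M B A) :
      Step M P (P \ {A})

/-- The single-term class `{f(x₁,…,x_k) ∈ M ∥ f(x₁,…,x_k)}`. -/
def singleTermClass (ar : F → ℕ) (f : F) : CClass F :=
  {⟨{Tm.app f ((List.range (ar f)).map Tm.var)}, Tm.app f ((List.range (ar f)).map Tm.var)⟩}

/-- The initial state `Π₀` of CC(X) for the equations `E`. -/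
def initState (ar : F → ℕ) (E : Set (Tm F × Tm F)) : Set (CClass F) :=
  { A | ∃ p ∈ E, A = ({⟨{p.1, p.2}, p.1⟩, ⟨{p.1, p.2}, p.2⟩} : CClass F) } ∪
  { A | ∃ f : F, A = singleTermClass ar f }

/-- `B` subsumes `A` by matching. -/
def SubsumesByMatching (M : Set (Tm F)) (B A : CClass F) : Prop :=
  ∃ σ : Subst F, Subst.dom σ ⊆ sepVars B ∧ (∀ x ∈ sepVars B, (σ x).varsIn ⊆ varsAll A) ∧
    ∀ ct ∈ A, ∃ τ : Subst F, Subst.dom τ ⊆ freeVars B ∧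
      (∀ y ∈ freeVars B, (τ y).varsIn ⊆ varsAll A) ∧
      ∃ ct' ∈ B, CTerm.term ct = ((CTerm.term ct').subst σ).subst τ ∧
        ∀ δ : Subst F, ConstrHolds M (CTerm.constr ct) δ →
          ∃ δ' : Subst F,
            ConstrHolds M (substConstr (substConstr (substConstr (CTerm.constr ct') σ) τ) δ) δ'

/-- `M` determined by the symbol-count ordering and a bound `β`. -/
def Mle (β : Tm F) : Set (Tm F) := { t | t.Ground ∧ t.size ≤ β.size }

def varsFinset (t : Tm F) : Finset ℕ := t.varsList.toFinset

/-- Truth of the LIA abstraction `lic(t ⪯ β)` under an integer assignment `v`. -/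
def licHolds (t β : Tm F) (v : ℕ → ℕ) : Prop :=
  (∀ x ∈ varsFinset t, 1 ≤ v x) ∧
  (∑ x ∈ varsFinset t, (t.count x : ℤ) * (v x : ℤ)) ≤
    (β.size : ℤ) - ((t.size : ℤ) - ∑ x ∈ varsFinset t, (t.count x : ℤ))


/- Every element of `gnd(A)` of an `M`-constrained class `A` is a subset of `M`, so `gnd` sends
such classes into the finite set `𝒫 (𝒫 M)`. Two classes of an infinite sequence therefore have the
same `gnd`, and the earlier one subsumes the later one. -/

theorem gnd_subset_powerset_of_mConstrained {M : Set (Tm F)} {A : CClass F}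
    (hA : MConstrained A) : gnd M A ⊆ 𝒫 M := by
  rintro _ ⟨B, ⟨σ₀, -, -, rfl⟩, rfl⟩ _ ⟨σ, -, _, ⟨ct, hct, -, rfl⟩, hholds, rfl⟩
  exact hholds ⟨(ct.subst σ₀).term, ⟨ct.term, hA ct hct, rfl⟩, rfl⟩

theorem subsumes_of_gnd_subset {M : Set (Tm F)} {A B : CClass F} (h : gnd M A ⊆ gnd M B) :
    Subsumes M B A :=
  fun A' hA' => ⟨A', h hA', subset_rfl⟩

theorem no_infinite_nonsubsumed_chain_general {F : Type}
    (M : Set (Tm F)) (hMfin : M.Finite) :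
    ¬ ∃ A : ℕ → CClass F,
        (∀ i, (A i).Finite ∧ MConstrained (A i)) ∧
        (∀ i j, j < i → ¬ Subsumes M (A j) (A i)) := by
  rintro ⟨A, hA, hns⟩
  obtain ⟨j, i, hji, hgnd⟩ := hMfin.powerset.powerset.exists_lt_map_eq_of_forall_mem
    (f := fun i => gnd M (A i)) fun i => gnd_subset_powerset_of_mConstrained (hA i).2
  exact hns i j hji (subsumes_of_gnd_subset hgnd.ge)

/-- There is no infinite sequence `A₀, A₁, A₂, …` of (possibly
non-ground) `M`-constrained congruence classes such that for every `i` the class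
`Aᵢ` is not subsumed by any class in `{A₀, …, A_{i−1}}`. -/
theorem no_infinite_nonsubsumed_chain {F : Type} [Finite F] [Nonempty F]
    (M : Set (Tm F)) (hMfin : M.Finite) (hMg : ∀ t ∈ M, t.Ground) :
    ¬ ∃ A : ℕ → CClass F,
        (∀ i, (A i).Finite ∧ MConstrained (A i)) ∧
        (∀ i j, j < i → ¬ Subsumes M (A j) (A i)) :=
  no_infinite_nonsubsumed_chain_general M hMfin

end NGCC
end

section
/- For every congruence class A, gnd(norm(A)) = gnd(A). -/
namespace NGCC

variable {F : Type}

/-! Fix a ground instance `σ` of the separating variables of `A`. Both `gnd`-sets belonging to `σ`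
are unions, over all total ground substitutions `θ` extending `σ`, of the instances
`{sθ | Γ ∥ s in the class, Γθ true}`. An instance of a renamed copy `Γ ∧ Γρ ∥ sρ` of `norm(A)` by
`θ` is the instance of `Γ ∥ s` by `ρθ`; conversely the instance of `Γ ∥ s` by `θ` is that of
`Γ ∧ Γρ ∥ s` by `θ` extended to the fresh variables through `ρ⁻¹`. Since `ρ` fixes the separating
variables, all these substitutions still extend `σ`. -/

namespace Tm
variable {F : Type}

theorem indOn {P : Tm F → Prop} (hv : ∀ x, P (.var x))
    (ha : ∀ f ts, (∀ t ∈ ts, P t) → P (.app f ts)) : ∀ t, P t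
  | .var x => hv x
  | .app f ts => ha f ts (fun t _ => indOn hv ha t)
  decreasing_by
    simp only [app.sizeOf_spec]
    have := List.sizeOf_lt_of_mem (by assumption : t ∈ ts)
    omega

@[simp] theorem subst_var (σ : Subst F) (x : ℕ) : (var x).subst σ = σ x := by
  simp [subst]

@[simp] theorem subst_app (σ : Subst F) (f : F) (ts : List (Tm F)) :
    (app f ts).subst σ = app f (ts.map fun t => t.subst σ) := by
  rw [subst]; congr 1; simp

@[simp] theorem varsList_var (x : ℕ) : (var x : Tm F).varsList = [x] := by simp [varsList]

@[simp] theorem varsList_app (f : F) (ts : List (Tm F)) :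
    (app f ts).varsList = (ts.map varsList).flatten := by
  rw [varsList]; congr 1; simp

theorem mem_varsList_subst {σ : Subst F} {x : ℕ} (t : Tm F) :
    x ∈ (t.subst σ).varsList ↔ ∃ y ∈ t.varsList, x ∈ (σ y).varsList := by
  induction t using indOn with
  | hv y => simp
  | ha f ts ih =>
    simp only [subst_app, varsList_app, List.mem_flatten, List.mem_map]
    constructor
    · rintro ⟨l, ⟨u, ⟨s, hs, rfl⟩, rfl⟩, hx⟩
      obtain ⟨y, hy, hxy⟩ := (ih s hs).1 hx
      exact ⟨y, ⟨_, ⟨s, hs, rfl⟩, hy⟩, hxy⟩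
    · rintro ⟨y, ⟨_, ⟨s, hs, rfl⟩, hy⟩, hxy⟩
      exact ⟨_, ⟨_, ⟨s, hs, rfl⟩, rfl⟩, (ih s hs).2 ⟨y, hy, hxy⟩⟩

theorem subst_subst (t : Tm F) (σ δ : Subst F) :
    (t.subst σ).subst δ = t.subst (Subst.comp σ δ) := by
  induction t using indOn with
  | hv y => simp [Subst.comp]
  | ha f ts ih =>
    simp only [subst_app, List.map_map]
    exact congrArg _ (List.map_congr_left ih)

theorem subst_congr {t : Tm F} {σ δ : Subst F} (h : Set.EqOn σ δ t.varsIn) :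
    t.subst σ = t.subst δ := by
  induction t using indOn with
  | hv y => simpa using h (by simp [varsIn])
  | ha f ts ih =>
    simp only [subst_app]
    refine congrArg _ (List.map_congr_left fun s hs => ih s hs fun x hx => h ?_)
    simp only [varsIn, varsList_app, List.mem_flatten, List.mem_map]
    exact ⟨_, ⟨s, hs, rfl⟩, hx⟩

theorem ground_iff {t : Tm F} : t.Ground ↔ ∀ x, x ∉ t.varsList :=
  List.eq_nil_iff_forall_not_mem

theorem ground_subst {t : Tm F} {σ : Subst F} (h : ∀ x ∈ t.varsList, (σ x).Ground) :
    (t.subst σ).Ground := by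
  refine ground_iff.2 fun x hx => ?_
  obtain ⟨y, hy, hxy⟩ := (mem_varsList_subst t).1 hx
  exact ground_iff.1 (h y hy) x hxy

theorem ground_of_ground_subst {t : Tm F} {σ : Subst F} (h : (t.subst σ).Ground) {x : ℕ}
    (hx : x ∈ t.varsList) : (σ x).Ground :=
  ground_iff.2 fun y hy => ground_iff.1 h y ((mem_varsList_subst t).2 ⟨x, hx, hy⟩)

theorem subst_id (t : Tm F) : t.subst var = t := by
  induction t using indOn with
  | hv y => simp
  | ha f ts ih =>
    simp only [subst_app]
    exact congrArg _ ((List.map_congr_left ih).trans (List.map_id _))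

theorem subst_ground {t : Tm F} (h : t.Ground) (σ : Subst F) : t.subst σ = t := by
  rw [subst_congr (δ := var) fun x hx => absurd hx (ground_iff.1 h x), subst_id]

end Tm

variable {F : Type} {M : Set (Tm F)}

theorem substConstr_substConstr (Γ : Set (Tm F)) (σ τ : Subst F) :
    substConstr (substConstr Γ σ) τ = substConstr Γ (Subst.comp σ τ) := by
  simp only [substConstr, Set.image_image, Tm.subst_subst]

theorem substConstr_union (Γ Δ : Set (Tm F)) (σ : Subst F) :
    substConstr (Γ ∪ Δ) σ = substConstr Γ σ ∪ substConstr Δ σ :=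
  Set.image_union _ _ _

theorem substConstr_congr {Γ : Set (Tm F)} {σ τ : Subst F}
    (h : ∀ u ∈ Γ, Set.EqOn σ τ u.varsIn) : substConstr Γ σ = substConstr Γ τ :=
  Set.image_congr fun u hu => Tm.subst_congr (h u hu)

section ClassVars
variable {A : CClass F} {ct : CTerm F}

theorem term_varsIn_subset_varsAll (hct : ct ∈ A) : ct.term.varsIn ⊆ varsAll A :=
  fun _ hx => Set.mem_biUnion hct (Or.inl hx)

theorem constr_varsIn_subset_varsAll (hct : ct ∈ A) {u : Tm F} (hu : u ∈ ct.constr) :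
    u.varsIn ⊆ varsAll A :=
  fun _ hx => Set.mem_biUnion hct (Or.inr (Set.mem_biUnion hu hx))

theorem sepVars_subset_varsAll (hct : ct ∈ A) : sepVars A ⊆ varsAll A :=
  fun _ hx => term_varsIn_subset_varsAll hct (Set.mem_iInter₂.1 hx ct hct)

theorem CTerm.subst_congr_of_eqOn_varsAll (hct : ct ∈ A) {σ τ : Subst F}
    (h : Set.EqOn σ τ (varsAll A)) : ct.subst σ = ct.subst τ := by
  simp only [CTerm.subst, CTerm.mk.injEq]
  exact ⟨substConstr_congr fun u hu => h.mono (constr_varsIn_subset_varsAll hct hu),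
    Tm.subst_congr (h.mono (term_varsIn_subset_varsAll hct))⟩

theorem notMem_freeVars_of_mem_sepVars {x : ℕ} (hx : x ∈ sepVars A) : x ∉ freeVars A :=
  fun h => h.2 hx

end ClassVars

section Renaming
variable {A : CClass F} {ρ : Subst F}

theorem IsNormRenaming.apply_of_mem_sepVars (hρ : IsNormRenaming A ρ) {x : ℕ}
    (hx : x ∈ sepVars A) : ρ x = Tm.var x :=
  hρ.2.1 x (notMem_freeVars_of_mem_sepVars hx)

theorem sepVars_normC (hρ : IsNormRenaming A ρ) : sepVars (normC A ρ) = sepVars A := by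
  ext x
  simp only [sepVars, Set.mem_iInter]
  constructor
  · exact fun h ct hct =>
      h ⟨ct.constr ∪ substConstr ct.constr ρ, ct.term⟩ (Or.inl ⟨ct, hct, rfl⟩)
  · rintro h ct' (⟨ct, hct, rfl⟩ | ⟨ct, hct, -, rfl⟩)
    · exact h ct hct
    · have hρx := hρ.apply_of_mem_sepVars (Set.mem_iInter₂.2 h)
      exact (Tm.mem_varsList_subst _).2 ⟨x, h ct hct, by simp [hρx]⟩

theorem IsNormRenaming.injective_freeVars (hρ : IsNormRenaming A ρ) :
    Function.Injective fun x : freeVars A => ρ x :=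
  fun a b hab => Subtype.ext (hρ.2.2.1 a a.2 b b.2 hab)

/-- `θ` on the variables of `A`, and `θ ∘ ρ⁻¹` on the fresh variables that `ρ` renames the free
ones to. -/
noncomputable def IsNormRenaming.extendSubst (A : CClass F) (ρ θ : Subst F) : Subst F :=
  fun y => Function.extend (fun x : freeVars A => ρ x) (fun x => θ x) (fun u => u.subst θ)
    (Tm.var y)

variable {θ : Subst F}

theorem IsNormRenaming.extendSubst_eqOn (hρ : IsNormRenaming A ρ) :
    Set.EqOn (IsNormRenaming.extendSubst A ρ θ) θ (varsAll A) := by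
  intro y hy
  refine (Function.extend_apply' _ _ _ ?_).trans (Tm.subst_var θ y)
  rintro ⟨⟨x, hx⟩, hxy⟩
  exact hρ.2.2.2 x hx y hxy hy

theorem IsNormRenaming.comp_extendSubst_eqOn (hρ : IsNormRenaming A ρ) :
    Set.EqOn (Subst.comp ρ (IsNormRenaming.extendSubst A ρ θ)) θ (varsAll A) := by
  intro x hx
  by_cases hxf : x ∈ freeVars A
  · obtain ⟨y, hy⟩ := hρ.1 x
    show (ρ x).subst _ = θ x
    rw [hy, Tm.subst_var, IsNormRenaming.extendSubst, ← hy]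
    exact hρ.injective_freeVars.extend_apply _ _ ⟨x, hxf⟩
  · simp only [Subst.comp, hρ.2.1 x hxf, Tm.subst_var]
    exact hρ.extendSubst_eqOn hx

theorem IsNormRenaming.extendSubst_ground (hρ : IsNormRenaming A ρ)
    (hθ : ∀ x, (θ x).Ground) (y : ℕ) : (IsNormRenaming.extendSubst A ρ θ y).Ground := by
  by_cases h : ∃ x : freeVars A, ρ x = Tm.var y
  · obtain ⟨x, hx⟩ := h
    simp only [IsNormRenaming.extendSubst, ← hx]
    rw [hρ.injective_freeVars.extend_apply]
    exact hθ x
  · simp only [IsNormRenaming.extendSubst]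
    rw [Function.extend_apply' _ _ _ h, Tm.subst_var]
    exact hθ y

end Renaming

theorem Subst.comp_eq_of_eqOn_dom {σ θ : Subst F} (hσ : ∀ x ∈ Subst.dom σ, (σ x).Ground)
    (h : Set.EqOn θ σ (Subst.dom σ)) : Subst.comp σ θ = θ := by
  funext x
  by_cases hx : x ∈ Subst.dom σ
  · exact (Tm.subst_ground (hσ x hx) θ).trans (h hx).symm
  · simp only [Subst.comp, not_not.1 hx, Tm.subst_var]

/-- The element of `gnd'(A)` determined by `σ`. -/
def gndClass (M : Set (Tm F)) (A : CClass F) (σ : Subst F) : CClass F :=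
  { ct' | ∃ ct ∈ A, ConstrSat M (substConstr (CTerm.constr ct) σ) ∧ ct' = ct.subst σ }

/-- The element of `gnd(A)` determined by an element `B` of `gnd'(A)`. -/
def gndTerms (M : Set (Tm F)) (B : CClass F) : Set (Tm F) :=
  { t | ∃ σ : Subst F, GroundingForClass σ B ∧
      ∃ ct ∈ B, ConstrHolds M (CTerm.constr ct) σ ∧ t = (CTerm.term ct).subst σ }

def groundExtensions (σ : Subst F) : Set (Subst F) :=
  { θ | (∀ x, (θ x).Ground) ∧ Set.EqOn θ σ (Subst.dom σ) }

theorem gnd_eq_image (A : CClass F) :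
    gnd M A = (fun σ => gndTerms M (gndClass M A σ)) ''
      { σ | Subst.dom σ = sepVars A ∧ ∀ x ∈ Subst.dom σ, (σ x).Ground } := by
  ext S
  constructor
  · rintro ⟨B, ⟨σ, hdom, hσ, rfl⟩, rfl⟩
    exact ⟨σ, ⟨hdom, hσ⟩, rfl⟩
  · rintro ⟨σ, ⟨hdom, hσ⟩, rfl⟩
    exact ⟨_, ⟨σ, hdom, hσ, rfl⟩, rfl⟩

theorem gndTerms_gndClass (A : CClass F) {σ : Subst F}
    (hσ : ∀ x ∈ Subst.dom σ, (σ x).Ground) :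
    gndTerms M (gndClass M A σ) = ⋃ θ ∈ groundExtensions σ, applyClass M A θ := by
  classical
  ext t
  simp only [Set.mem_iUnion, exists_prop]
  constructor
  · rintro ⟨τ, hτ, _, ⟨ct, hct, hsat, rfl⟩, hΓ, rfl⟩
    -- `τ` is ground only on the variables of the class; elsewhere use the ground term `t`
    obtain ⟨hgrd_term, hgrd_constr⟩ : ((ct.term.subst σ).subst τ).Ground ∧
        ∀ u ∈ substConstr ct.constr σ, (u.subst τ).Ground := hτ _ ⟨ct, hct, hsat, rfl⟩
    set τ₀ : Subst F := fun x => if (τ x).Ground then τ x else (ct.term.subst σ).subst τ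
    have hτ₀ : ∀ x, (τ₀ x).Ground := fun x => by
      by_cases hx : (τ x).Ground
      · simp [τ₀, hx]
      · simpa [τ₀, hx] using hgrd_term
    have hτ₀τ : ∀ u : Tm F, (u.subst τ).Ground → u.subst τ₀ = u.subst τ := fun u hu =>
      Tm.subst_congr fun x hx => if_pos (Tm.ground_of_ground_subst hu hx)
    have hΓτ₀ :
        substConstr (substConstr ct.constr σ) τ₀ = substConstr (substConstr ct.constr σ) τ :=
      Set.image_congr fun u hu => hτ₀τ u (hgrd_constr u hu)
    refine ⟨Subst.comp σ τ₀, ⟨fun x => Tm.ground_subst fun y _ => hτ₀ y,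
      fun x hx => Tm.subst_ground (hσ x hx) τ₀⟩, ct, hct, ?_, ?_⟩
    · rw [ConstrHolds, ← substConstr_substConstr, hΓτ₀]
      exact hΓ
    · rw [← Tm.subst_subst]
      exact (hτ₀τ _ hgrd_term).symm
  · rintro ⟨θ, ⟨hθ, hθσ⟩, ct, hct, hΓ, rfl⟩
    have hcomp := Subst.comp_eq_of_eqOn_dom hσ hθσ
    have hΓσ : ConstrHolds M (substConstr ct.constr σ) θ := by
      rw [ConstrHolds, substConstr_substConstr, hcomp]
      exact hΓ
    refine ⟨θ, ?_, ct.subst σ, ⟨ct, hct, ⟨θ, hΓσ⟩, rfl⟩, hΓσ, ?_⟩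
    · rintro _ ⟨ct', -, -, rfl⟩
      exact ⟨Tm.ground_subst fun x _ => hθ x, fun u _ => Tm.ground_subst fun x _ => hθ x⟩
    · show _ = (ct.term.subst σ).subst θ
      rw [Tm.subst_subst, hcomp]

section Norm
variable {A : CClass F} {ρ σ θ : Subst F}

theorem applyClass_normC_subset (ρ θ : Subst F) :
    applyClass M (normC A ρ) θ ⊆ applyClass M A θ ∪ applyClass M A (Subst.comp ρ θ) := by
  rintro t ⟨_, ⟨ct, hct, rfl⟩ | ⟨ct, hct, -, rfl⟩, hΓ, rfl⟩
  · exact Or.inl ⟨ct, hct, (Set.image_mono Set.subset_union_left).trans hΓ, rfl⟩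
  · refine Or.inr ⟨ct, hct, ?_, Tm.subst_subst _ _ _⟩
    rw [ConstrHolds, ← substConstr_substConstr]
    exact (Set.image_mono Set.subset_union_right).trans hΓ

theorem applyClass_subset_normC (hρ : IsNormRenaming A ρ) (θ : Subst F) :
    applyClass M A θ ⊆ applyClass M (normC A ρ) (IsNormRenaming.extendSubst A ρ θ) := by
  rintro t ⟨ct, hct, hΓ, rfl⟩
  have hself :
      substConstr ct.constr (IsNormRenaming.extendSubst A ρ θ) = substConstr ct.constr θ :=
    congrArg CTerm.constr (CTerm.subst_congr_of_eqOn_varsAll hct hρ.extendSubst_eqOn)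
  have hren : substConstr ct.constr (Subst.comp ρ (IsNormRenaming.extendSubst A ρ θ)) =
      substConstr ct.constr θ :=
    congrArg CTerm.constr (CTerm.subst_congr_of_eqOn_varsAll hct hρ.comp_extendSubst_eqOn)
  refine ⟨_, Or.inl ⟨ct, hct, rfl⟩, ?_, ?_⟩
  · show substConstr (ct.constr ∪ substConstr ct.constr ρ) _ ⊆ M
    rw [substConstr_union, substConstr_substConstr, hself, hren, Set.union_self]
    exact hΓ
  · exact (congrArg CTerm.term
      (CTerm.subst_congr_of_eqOn_varsAll hct hρ.extendSubst_eqOn)).symm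

theorem IsNormRenaming.comp_mem_groundExtensions (hρ : IsNormRenaming A ρ)
    (hdom : Subst.dom σ = sepVars A) (hθ : θ ∈ groundExtensions σ) :
    Subst.comp ρ θ ∈ groundExtensions σ := by
  refine ⟨fun x => ?_, fun x hx => ?_⟩
  · obtain ⟨y, hy⟩ := hρ.1 x
    show ((ρ x).subst θ).Ground
    rw [hy, Tm.subst_var]
    exact hθ.1 y
  · show (ρ x).subst θ = σ x
    rw [hρ.apply_of_mem_sepVars (hdom ▸ hx), Tm.subst_var]
    exact hθ.2 hx

theorem IsNormRenaming.extendSubst_mem_groundExtensions (hρ : IsNormRenaming A ρ)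
    (hA : A.Nonempty) (hdom : Subst.dom σ = sepVars A) (hθ : θ ∈ groundExtensions σ) :
    IsNormRenaming.extendSubst A ρ θ ∈ groundExtensions σ := by
  obtain ⟨ct, hct⟩ := hA
  exact ⟨hρ.extendSubst_ground hθ.1, fun x hx =>
    (hρ.extendSubst_eqOn (sepVars_subset_varsAll hct (hdom ▸ hx))).trans (hθ.2 hx)⟩

theorem biUnion_applyClass_normC (hρ : IsNormRenaming A ρ) (hdom : Subst.dom σ = sepVars A) :
    ⋃ θ ∈ groundExtensions σ, applyClass M (normC A ρ) θ =
      ⋃ θ ∈ groundExtensions σ, applyClass M A θ := by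
  apply subset_antisymm <;> refine Set.iUnion₂_subset fun θ hθ t ht => ?_
  · rcases applyClass_normC_subset ρ θ ht with ht | ht
    · exact Set.mem_biUnion hθ ht
    · exact Set.mem_biUnion (hρ.comp_mem_groundExtensions hdom hθ) ht
  · obtain ⟨ct, hct, -⟩ := id ht
    exact Set.mem_biUnion (hρ.extendSubst_mem_groundExtensions ⟨ct, hct⟩ hdom hθ)
      (applyClass_subset_normC hρ θ ht)

end Norm

theorem gnd_norm_eq_gnd_general {F : Type} (M : Set (Tm F)) (A : CClass F) (ρ : Subst F)
    (hρ : IsNormRenaming A ρ) :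
    gnd M (normC A ρ) = gnd M A := by
  rw [gnd_eq_image, gnd_eq_image, sepVars_normC hρ]
  refine Set.image_congr fun σ ⟨hdom, hσ⟩ => ?_
  rw [gndTerms_gndClass _ hσ, gndTerms_gndClass _ hσ, biUnion_applyClass_normC hρ hdom]

/-- For every congruence class `A`, `gnd(norm(A)) = gnd(A)`. -/
theorem gnd_norm_eq_gnd {F : Type} [Finite F] [Nonempty F]
    (M : Set (Tm F)) (hMfin : M.Finite) (hMg : ∀ t ∈ M, t.Ground)
    (A : CClass F) (hAfin : A.Finite) (ρ : Subst F) (hρ : IsNormRenaming A ρ) :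
    gnd M (normC A ρ) = gnd M A :=
  gnd_norm_eq_gnd_general M A ρ hρ

end NGCC
end

section
/- Termination of CC(𝒳): every run of ⇒_CC(𝒳) starting from the initial state Π₀ for E and M is finite, i.e. reaches a state where none of the rules Merge, Deduction, Subsumption is applicable. -/
namespace NGCC

variable {F : Type}

/-! Every class ever produced is `M`-constrained, so each element of its `gnd` is a subset of
the finite set `M`; hence only finitely many families of ground classes can be subsumed at all.
A Merge or Deduction step adds a class subsumed by no class present, so the set of families
subsumed by the state strictly grows inside this finite universe, while a Subsumption step keeps
that set and removes a class. The pair (number of families not yet subsumed, number of classes)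
therefore decreases lexicographically at every step. -/

namespace MConstrained

variable {A B : CClass F}

lemma substClass (h : MConstrained A) (σ : Subst F) : MConstrained (NGCC.substClass A σ) := by
  rintro _ ⟨ct, hct, rfl⟩
  exact ⟨ct.term, h ct hct, rfl⟩

lemma addConstr (h : MConstrained A) (Γ : Set (Tm F)) : MConstrained (NGCC.addConstr A Γ) := by
  rintro _ ⟨ct, hct, rfl⟩
  exact Or.inl (h ct hct)

lemma union (hA : MConstrained A) (hB : MConstrained B) : MConstrained (A ∪ B) := by
  rintro ct (h | h)
  exacts [hA ct h, hB ct h]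

lemma normC (h : MConstrained A) (ρ : Subst F) : MConstrained (NGCC.normC A ρ) := by
  rintro _ (⟨ct, hct, rfl⟩ | ⟨ct, hct, -, rfl⟩)
  · exact Or.inl (h ct hct)
  · exact Or.inr ⟨ct.term, h ct hct, rfl⟩

lemma gnd_subset {M : Set (Tm F)} (h : MConstrained A) : ∀ S ∈ gnd M A, S ⊆ M := by
  rintro _ ⟨_, ⟨σ₀, -, -, rfl⟩, rfl⟩ _ ⟨σ, -, _, ⟨ct, hct, -, rfl⟩, hholds, rfl⟩
  exact hholds ⟨ct.term.subst σ₀, ⟨ct.term, h ct hct, rfl⟩, rfl⟩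

end MConstrained

lemma initState_finite [Finite F] (ar : F → ℕ) {E : Set (Tm F × Tm F)} (hE : E.Finite) :
    (initState ar E).Finite := by
  refine ((hE.image fun p => ({⟨{p.1, p.2}, p.1⟩, ⟨{p.1, p.2}, p.2⟩} : CClass F)).union
    (Set.finite_range (singleTermClass ar))).subset ?_
  rintro _ (⟨p, hp, rfl⟩ | ⟨f, rfl⟩)
  exacts [Or.inl ⟨p, hp, rfl⟩, Or.inr ⟨f, rfl⟩]

lemma mConstrained_of_mem_initState {ar : F → ℕ} {E : Set (Tm F × Tm F)} {A : CClass F}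
    (hA : A ∈ initState ar E) : MConstrained A := by
  rcases hA with ⟨p, -, rfl⟩ | ⟨f, rfl⟩
  · rintro ct (rfl | rfl)
    exacts [Set.mem_insert _ _, Set.mem_insert_of_mem _ rfl]
  · rintro ct rfl
    exact rfl

lemma Step.insert_or_diff {M : Set (Tm F)} {P Q : Set (CClass F)} (h : Step M P Q)
    (hP : ∀ C ∈ P, MConstrained C) :
    (∃ C', Q = insert C' P ∧ MConstrained C' ∧ ∀ C ∈ P, ¬ Subsumes M C C') ∨
    (∃ A ∈ P, ∃ B ∈ P, A ≠ B ∧ Subsumes M B A ∧ Q = P \ {A}) := by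
  cases h with
  | merge A B C' ρA ρB μ _ _ hA hB _ _ _ _ _ hC' hnsub =>
    refine Or.inl ⟨C', rfl, ?_, hnsub⟩
    rw [hC']
    exact ((((hP A hA).normC ρA).addConstr _).union (((hP B hB).normC ρB).addConstr _)).substClass μ
  | deduction A B C' f ss ts ss' ts' Γ Δ _ _ μ hA hB h1 h2 _ _ _ _ _ _ hmgu hC' hnsub =>
    refine Or.inl ⟨C', rfl, ?_, hnsub⟩
    rw [hC']
    -- the unifier turns each new term into an instance of a term of `A` or `B`
    rintro _ ⟨ct, rfl | rfl, rfl⟩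
    · show (Tm.app f ss').subst μ ∈ substConstr (Γ ∪ Δ ∪ _ ∪ _) μ
      rw [hmgu.1]
      exact ⟨Tm.app f ss, Or.inl (Or.inl (Or.inl (hP A hA _ h1))), rfl⟩
    · show (Tm.app f ts').subst μ ∈ substConstr (Γ ∪ Δ ∪ _ ∪ _) μ
      rw [hmgu.2.1]
      exact ⟨Tm.app f ts, Or.inl (Or.inl (Or.inr (hP B hB _ h2))), rfl⟩
  | subsump A B hA hB hne hsub => exact Or.inr ⟨A, hA, B, hB, hne, hsub, rfl⟩

def subsumedFamilies (M : Set (Tm F)) (P : Set (CClass F)) : Set (Set (Set (Tm F))) :=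
  {X | ∃ C ∈ P, ∀ A' ∈ X, ∃ B' ∈ gnd M C, A' ⊆ B'}

lemma subsumedFamilies_mono (M : Set (Tm F)) {P Q : Set (CClass F)} (h : P ⊆ Q) :
    subsumedFamilies M P ⊆ subsumedFamilies M Q :=
  fun _ ⟨C, hC, hX⟩ => ⟨C, h hC, hX⟩

lemma subsumedFamilies_diff_singleton {M : Set (Tm F)} {P : Set (CClass F)} {A B : CClass F}
    (hB : B ∈ P) (hne : A ≠ B) (hsub : Subsumes M B A) :
    subsumedFamilies M (P \ {A}) = subsumedFamilies M P := by
  refine (subsumedFamilies_mono M Set.sdiff_subset).antisymm ?_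
  rintro X ⟨C, hC, hX⟩
  by_cases hCA : C = A
  · subst hCA
    refine ⟨B, ⟨hB, Ne.symm hne⟩, fun A' hA' => ?_⟩
    obtain ⟨B', hB', hA'B'⟩ := hX A' hA'
    obtain ⟨B'', hB'', hB'B''⟩ := hsub B' hB'
    exact ⟨B'', hB'', hA'B'.trans hB'B''⟩
  · exact ⟨C, ⟨hC, hCA⟩, hX⟩

def familiesOver (M : Set (Tm F)) : Set (Set (Set (Tm F))) := {X | ∀ S ∈ X, S ⊆ M}

lemma familiesOver_finite {M : Set (Tm F)} (hM : M.Finite) : (familiesOver M).Finite :=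
  hM.finite_subsets.finite_subsets

noncomputable def stateMeasure (M : Set (Tm F)) (P : Set (CClass F)) : ℕ ×ₗ ℕ :=
  toLex ((familiesOver M \ subsumedFamilies M P).ncard, P.ncard)

lemma Step.stateMeasure_lt {M : Set (Tm F)} (hM : M.Finite) {P Q : Set (CClass F)}
    (h : Step M P Q) (hPfin : P.Finite) (hP : ∀ C ∈ P, MConstrained C) :
    stateMeasure M Q < stateMeasure M P := by
  rcases h.insert_or_diff hP with ⟨C', rfl, hC', hnsub⟩ | ⟨A, hA, B, hB, hne, hsub, rfl⟩
  · have hsubset : familiesOver M \ subsumedFamilies M (insert C' P) ⊂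
        familiesOver M \ subsumedFamilies M P := by
      refine (Set.ssubset_iff_of_subset (Set.sdiff_subset_sdiff_right
        (subsumedFamilies_mono M (Set.subset_insert C' P)))).2 ⟨gnd M C', ?_, ?_⟩
      · exact ⟨hC'.gnd_subset, fun ⟨C, hC, hCC'⟩ => hnsub C hC hCC'⟩
      · exact fun h => h.2 ⟨C', Set.mem_insert _ _, fun A' hA' => ⟨A', hA', le_rfl⟩⟩
    exact Prod.Lex.toLex_lt_toLex.2 <|
      Or.inl (Set.ncard_lt_ncard hsubset (familiesOver_finite hM).sdiff)
  · rw [stateMeasure, stateMeasure, subsumedFamilies_diff_singleton hB hne hsub]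
    exact Prod.Lex.toLex_lt_toLex.2 <| Or.inr ⟨rfl, Set.ncard_sdiff_singleton_lt_of_mem hA hPfin⟩

lemma Step.finite_and_mConstrained {M : Set (Tm F)} {P Q : Set (CClass F)} (h : Step M P Q)
    (hPfin : P.Finite) (hP : ∀ C ∈ P, MConstrained C) :
    Q.Finite ∧ ∀ C ∈ Q, MConstrained C := by
  rcases h.insert_or_diff hP with ⟨C', rfl, hC', -⟩ | ⟨A, -, B, -, -, -, rfl⟩
  · exact ⟨hPfin.insert C', Set.forall_mem_insert.2 ⟨hC', hP⟩⟩
  · exact ⟨hPfin.sdiff, fun C hC => hP C hC.1⟩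

theorem ccx_terminating_general {F : Type} [Fintype F] (ar : F → ℕ)
    (M : Set (Tm F)) (hMfin : M.Finite)
    (E : Set (Tm F × Tm F)) (hEfin : E.Finite) :
    ¬ ∃ π : ℕ → Set (CClass F),
        π 0 = initState ar E ∧ ∀ n, Step M (π n) (π (n + 1)) := by
  rintro ⟨π, h0, hstep⟩
  have hinv : ∀ n, (π n).Finite ∧ ∀ C ∈ π n, MConstrained C := by
    intro n
    induction n with
    | zero => exact h0 ▸ ⟨initState_finite ar hEfin, fun _ => mConstrained_of_mem_initState⟩
    | succ n ih => exact (hstep n).finite_and_mConstrained ih.1 ih.2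
  obtain ⟨n, hn⟩ := WellFounded.not_rel_apply_succ (r := (· < ·)) fun n => stateMeasure M (π n)
  exact hn ((hstep n).stateMeasure_lt hMfin (hinv n).1 (hinv n).2)

/-- Termination of CC(X): there is no infinite run of the
calculus starting from the initial state. -/
theorem ccx_terminating {F : Type} [Fintype F] [Nonempty F] (ar : F → ℕ)
    (M : Set (Tm F)) (hMfin : M.Finite) (hMg : ∀ t ∈ M, t.Ground)
    (E : Set (Tm F × Tm F)) (hEfin : E.Finite)
    (hEg : ∀ p ∈ E, ∃ σ : Subst F, Tm.subst σ p.1 ∈ M ∧ Tm.subst σ p.2 ∈ M) :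
    ¬ ∃ π : ℕ → Set (CClass F),
        π 0 = initState ar E ∧ ∀ n, Step M (π n) (π (n + 1)) :=
  ccx_terminating_general ar M hMfin E hEfin

end NGCC
end
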